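/- arXiv:2003.05623 — 2 statements merged into one kernel-verified Lean document; each statement's English description precedes it below -/
import Mathlib

section
/- Suppose the evaluation policy satisfies sequential ignorability. Then the value of the evaluation policy admits the representation E[Y(Ā_{1:T})] = Σ_{a_{1:T} ∈ 𝒜_1×⋯×𝒜_T} E[ Y(a_{1:T}) · ∏_{t=1}^T π̄_t(a_t | H̄_t(a_{1:t-1})) ]. -/
open MeasureTheory ProbabilityTheory Filter
open scoped ENNReal

noncomputable section

namespace OPE

variable {Ω 𝒮 : Type} [m : MeasurableSpace Ω] [MeasurableSpace 𝒮]
variable {A : ℕ → Type} [∀ t, Fintype (A t)] [∀ t, Nonempty (A t)]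
  [∀ t, DecidableEq (A t)] [∀ t, MeasurableSpace (A t)]

/-- The discounted return `Y(a_{1:T}) = ∑_{t=1}^T γ^{t-1} R_t(a_{1:t})`
(time is `0`-indexed here, so the discount at time `t` is `γ ^ t`). -/
def ret (R : ℕ → ((s : ℕ) → A s) → Ω → ℝ) (γ : ℝ) (T : ℕ)
    (a : (s : ℕ) → A s) (ω : Ω) : ℝ :=
  ∑ t ∈ Finset.range T, γ ^ t * R t a ω

/-- The (random) action sequence generated by a family of action variables. -/
def seqOf (Aact : (t : ℕ) → Ω → A t) (ω : Ω) : (s : ℕ) → A s := fun s => Aact s ω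

/-- Extension of a finite action sequence `a_{1:T}` to all times (the values beyond
the horizon are irrelevant). -/
def extAct (T : ℕ) (aF : (s : Fin T) → A s.1) : (s : ℕ) → A s := fun s =>
  if h : s < T then aF ⟨s, h⟩ else Classical.arbitrary (A s)

/-- The σ-algebra generated by the potential states `S_1, …, S_t` along the (deterministic)
counterfactual action sequence `a`; this is the information in `H_t(a_{1:t-1})`. -/
def histC (S : ℕ → ((s : ℕ) → A s) → Ω → 𝒮) (t : ℕ) (a : (s : ℕ) → A s) :
    MeasurableSpace Ω :=
  ⨆ s ∈ Finset.range (t + 1), MeasurableSpace.comap (S s a) inferInstance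

/-- The σ-algebra generated by the history `H_t = (S_1, A_1, S_2(A_1), …, A_{t-1},
S_t(A_{1:t-1}))` generated by the action process `Aact`. -/
def hist (S : ℕ → ((s : ℕ) → A s) → Ω → 𝒮) (Aact : (t : ℕ) → Ω → A t) (t : ℕ) :
    MeasurableSpace Ω :=
  (⨆ s ∈ Finset.range (t + 1),
      MeasurableSpace.comap (fun ω => S s (seqOf Aact ω) ω) inferInstance) ⊔
  (⨆ s ∈ Finset.range t, MeasurableSpace.comap (Aact s) inferInstance)

/-- `π_t(b ∣ H_t)`: the conditional probability that the behavior policy takes action `b`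
at time `t` given the observed history. -/
def piObs (P : Measure Ω) (S : ℕ → ((s : ℕ) → A s) → Ω → 𝒮)
    (Aobs : (t : ℕ) → Ω → A t) (t : ℕ) (b : A t) : Ω → ℝ :=
  P[fun ω => if Aobs t ω = b then (1 : ℝ) else 0 | hist S Aobs t]

/-- `π_t(a_t ∣ H_t(a_{1:t-1}))`: the conditional probability of the action `a_t` given the
counterfactual history along `a`. -/
def piC (P : Measure Ω) (S : ℕ → ((s : ℕ) → A s) → Ω → 𝒮)
    (Aobs : (t : ℕ) → Ω → A t) (t : ℕ) (a : (s : ℕ) → A s) : Ω → ℝ :=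
  P[fun ω => if Aobs t ω = a t then (1 : ℝ) else 0 | histC S t a]

/-- Importance sampling ratio `ρ_t = π̄_t(A_t ∣ H̄_t(A_{1:t-1})) / π_t(A_t ∣ H_t)`. -/
def rho (P : Measure Ω) (S : ℕ → ((s : ℕ) → A s) → Ω → 𝒮)
    (Aobs : (t : ℕ) → Ω → A t)
    (πbar : (t : ℕ) → A t → ((s : ℕ) → A s) → Ω → ℝ) (t : ℕ) : Ω → ℝ := fun ω =>
  πbar t (Aobs t ω) (seqOf Aobs ω) ω / piObs P S Aobs t (Aobs t ω) ω

/-- The tuple of potential outcomes relevant to sequential ignorability at time `t`: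
the rewards `R_s(a_{1:s})` for `t ≤ s ≤ T` and states `S_s(a_{1:s-1})` for `t < s ≤ T`,
over all action sequences. -/
def Wfut (S : ℕ → ((s : ℕ) → A s) → Ω → 𝒮) (R : ℕ → ((s : ℕ) → A s) → Ω → ℝ)
    (T : ℕ) (t : ℕ) (ω : Ω) :
    (((s : ℕ) → A s) → {s : ℕ // t ≤ s ∧ s < T} → ℝ) ×
      (((s : ℕ) → A s) → {s : ℕ // t < s ∧ s < T} → 𝒮) :=
  (fun a s => R s.1 a ω, fun a s => S s.1 a ω)

/-- The tuple `W` of all potential states and rewards over all action sequences. -/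
def Wall (S : ℕ → ((s : ℕ) → A s) → Ω → 𝒮) (R : ℕ → ((s : ℕ) → A s) → Ω → ℝ)
    (T : ℕ) (ω : Ω) :
    (((s : ℕ) → A s) → {s : ℕ // s < T} → ℝ) ×
      (((s : ℕ) → A s) → {s : ℕ // s < T} → 𝒮) :=
  (fun a s => R s.1 a ω, fun a s => S s.1 a ω)

/-- Conditional independence of `f` and `g` given the σ-algebra `mH`, expressed through the
factorization of conditional expectations of indicators. -/
def CondIndepGiven (P : Measure Ω) (mH : MeasurableSpace Ω) {β γ : Type*}
    [MeasurableSpace β] [MeasurableSpace γ] (f : Ω → β) (g : Ω → γ) : Prop :=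
  ∀ (u : Set β) (v : Set γ), MeasurableSet u → MeasurableSet v →
    (P[fun ω => (u.indicator (fun _ => (1 : ℝ)) (f ω)) *
        (v.indicator (fun _ => (1 : ℝ)) (g ω)) | mH])
      =ᵐ[P]
    (fun ω => ((P[fun ω' => u.indicator (fun _ => (1 : ℝ)) (f ω') | mH]) ω) *
        ((P[fun ω' => v.indicator (fun _ => (1 : ℝ)) (g ω') | mH]) ω))

/-- Sequential ignorability of the action process `Aact` at time `t`: conditionally on the
history it generates, the action at time `t` is independent of the future potential outcomes. -/
def SeqIgnorableAt (P : Measure Ω) (S : ℕ → ((s : ℕ) → A s) → Ω → 𝒮)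
    (R : ℕ → ((s : ℕ) → A s) → Ω → ℝ) (T : ℕ)
    (Aact : (t : ℕ) → Ω → A t) (t : ℕ) : Prop :=
  CondIndepGiven P (hist S Aact t) (Aact t) (Wfut S R T t)

/-- The evaluation policy actions `Ā_t` are drawn as `Ā_t ∼ π̄_t(⋅ ∣ H̄_t)`. -/
def GeneratedBy (P : Measure Ω) (S : ℕ → ((s : ℕ) → A s) → Ω → 𝒮) (T : ℕ)
    (Abar : (t : ℕ) → Ω → A t)
    (πbar : (t : ℕ) → A t → ((s : ℕ) → A s) → Ω → ℝ) : Prop :=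
  ∀ t < T, ∀ b : A t,
    (P[fun ω => if Abar t ω = b then (1 : ℝ) else 0 | hist S Abar t])
      =ᵐ[P] (fun ω => πbar t b (seqOf Abar ω) ω)

/-- `E[X ∣ H_t(a_{1:t-1}), A_t = a_t]`, the conditional expectation given the counterfactual
history and the event `A_t = a_t`. -/
def condE (P : Measure Ω) (S : ℕ → ((s : ℕ) → A s) → Ω → 𝒮)
    (Aobs : (t : ℕ) → Ω → A t) (t : ℕ) (a : (s : ℕ) → A s) (X : Ω → ℝ) : Ω → ℝ :=
  fun ω =>
    (P[fun ω' => X ω' * (if Aobs t ω' = a t then (1 : ℝ) else 0) | histC S t a]) ω /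
      piC P S Aobs t a ω

/-- Nested conditional expectation: `nestE a t₁ k X = E^{t₁}_{a}[⋯ E^{t₁+k}_{a}[X] ⋯]`,
so `E^{t₁:t₂}_{a_{1:t₂}}[X] = nestE a t₁ (t₂ - t₁) X`. -/
def nestE (P : Measure Ω) (S : ℕ → ((s : ℕ) → A s) → Ω → 𝒮)
    (Aobs : (t : ℕ) → Ω → A t) (a : (s : ℕ) → A s) (t1 : ℕ) :
    ℕ → (Ω → ℝ) → Ω → ℝ
  | 0 => fun X => condE P S Aobs t1 a X
  | (k + 1) => fun X => nestE P S Aobs a t1 k (condE P S Aobs (t1 + k + 1) a X)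

/-- `E[X ∣ H_t, A_t = b]`, the conditional expectation given the observed history and the
event `A_t = b`. -/
def condEobs (P : Measure Ω) (S : ℕ → ((s : ℕ) → A s) → Ω → 𝒮)
    (Aobs : (t : ℕ) → Ω → A t) (t : ℕ) (b : A t) (X : Ω → ℝ) : Ω → ℝ :=
  fun ω =>
    (P[fun ω' => X ω' * (if Aobs t ω' = b then (1 : ℝ) else 0) | hist S Aobs t]) ω /
      piObs P S Aobs t b ω

/-- The weighted squared loss `ℓ_Γ(z) = ½ (Γ (z)₋² + (z)₊²)`. -/
def lossG (Γ : ℝ) (z : ℝ) : ℝ := (Γ * (max (-z) 0) ^ 2 + (max z 0) ^ 2) / 2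

end OPE

/-!
Along the evaluation policy the return is `Y(Ā) = ∑_a 1{Ā = a} Y(a)`; split `Y(a)` into the
rewards `R_s(a)`. Since `R_s(a)` only depends on `a_{1:s}`, summing over `a` removes the
indicators `1{Ā_t = a_t}` for `t > s`, and likewise the weights `π̄_t(a_t ∣ ·)` on the other side.
The remaining indicators are replaced by `π̄_t(a_t ∣ H̄_t(a))` one at a time, from `t = s` down to
`t = 1`. On the event `{Ā_{1:t-1} = a_{1:t-1}}` the counterfactual history `H̄_t(a)` is the
observed history `H̄_t`, so the integrand (`R_s(a)` times the weights `π̄_u` already inserted for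
`u > t`) is a function of `H̄_t` and of the outcomes from time `t` on. Sequential ignorability
makes `Ā_t` conditionally independent of those outcomes given `H̄_t`, hence
`E[1{Ā_t = a_t} ∣ H̄_t, outcomes] = π̄_t(a_t ∣ H̄_t)`.
-/

open Set

theorem Fintype.sum_mul_eq_sum_mul_of_sum_update_eq {ι : Type*} [Fintype ι] [DecidableEq ι]
    {B : ι → Type*} [∀ i, Fintype (B i)] (i : ι) [Nonempty (B i)]
    {h φ ψ : ((j : ι) → B j) → ℝ} (hh : ∀ a b, h (Function.update a i b) = h a)
    (hφψ : ∀ a, ∑ b, φ (Function.update a i b) = ∑ b, ψ (Function.update a i b)) :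
    ∑ a, h a * φ a = ∑ a, h a * ψ a := by
  let e := Equiv.piSplitAt i B
  have update_symm : ∀ x r b, Function.update (e.symm (x, r)) i b = e.symm (b, r) := by
    intro x r b
    funext j
    rcases eq_or_ne j i with rfl | hj
    · simp [e, Equiv.piSplitAt_symm_apply]
    · simp [e, Equiv.piSplitAt_symm_apply, hj]
  obtain ⟨x₀⟩ := ‹Nonempty (B i)›
  have split : ∀ χ : ((j : ι) → B j) → ℝ, ∑ a, h a * χ a
      = ∑ r, h (e.symm (x₀, r)) * ∑ b, χ (Function.update (e.symm (x₀, r)) i b) := by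
    intro χ
    rw [← e.symm.sum_comp, Fintype.sum_prod_type, Finset.sum_comm]
    refine Finset.sum_congr rfl fun r _ => ?_
    rw [Finset.mul_sum]
    refine Finset.sum_congr rfl fun x _ => ?_
    rw [← update_symm x₀ r x, hh]
  simp only [split, hφψ]

theorem MeasurableSpace.sup_eq_generateFrom_image2_inter {Ω : Type*}
    (m₁ m₂ : MeasurableSpace Ω) :
    m₁ ⊔ m₂ =
      generateFrom (image2 (· ∩ ·) {s | MeasurableSet[m₁] s} {t | MeasurableSet[m₂] t}) := by
  refine le_antisymm (sup_le ?_ ?_) (generateFrom_le ?_)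
  · exact fun s hs => measurableSet_generateFrom ⟨s, hs, univ, .univ, inter_univ s⟩
  · exact fun t ht => measurableSet_generateFrom ⟨univ, .univ, t, ht, univ_inter t⟩
  · rintro _ ⟨s, hs, t, ht, rfl⟩
    exact (le_sup_left (b := m₂) s hs).inter (le_sup_right (a := m₁) t ht)

theorem MeasurableSpace.isPiSystem_image2_inter {Ω : Type*} (m₁ m₂ : MeasurableSpace Ω) :
    IsPiSystem (image2 (· ∩ ·) {s | MeasurableSet[m₁] s} {t | MeasurableSet[m₂] t}) := by
  rintro _ ⟨s₁, hs₁, t₁, ht₁, rfl⟩ _ ⟨s₂, hs₂, t₂, ht₂, rfl⟩ -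
  exact ⟨s₁ ∩ s₂, hs₁.inter hs₂, t₁ ∩ t₂, ht₁.inter ht₂, (inter_inter_inter_comm s₁ t₁ s₂ t₂).symm⟩

namespace MeasureTheory

variable {Ω : Type*} {m : MeasurableSpace Ω} [mΩ : MeasurableSpace Ω] {P : Measure Ω}

theorem setIntegral_eq_of_isPiSystem_of_univ_mem (hm : m ≤ mΩ)
    {C : Set (Set Ω)} (hgen : m = MeasurableSpace.generateFrom C) (hC : IsPiSystem C)
    (huniv : univ ∈ C) {f g : Ω → ℝ} (hf : Integrable f P) (hg : Integrable g P)
    (hfg : ∀ s ∈ C, ∫ x in s, f x ∂P = ∫ x in s, g x ∂P) {s : Set Ω} (hs : MeasurableSet[m] s) :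
    ∫ x in s, f x ∂P = ∫ x in s, g x ∂P := by
  induction s, hs using MeasurableSpace.induction_on_inter hgen hC with
  | empty => simp
  | basic t ht => exact hfg t ht
  | compl t ht iht =>
    have hf_add := integral_add_compl (hm t ht) hf
    have hg_add := integral_add_compl (hm t ht) hg
    have h_univ := hfg univ huniv
    rw [setIntegral_univ, setIntegral_univ] at h_univ
    linarith
  | iUnion t htd ht iht =>
    rw [integral_iUnion (fun n => hm _ (ht n)) htd hf.integrableOn,
      integral_iUnion (fun n => hm _ (ht n)) htd hg.integrableOn]
    exact tsum_congr iht

theorem integrable_indicator_one_comp [IsFiniteMeasure P] {δ : Type*} [MeasurableSpace δ]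
    {h : Ω → δ} (hh : Measurable h) {v : Set δ} (hv : MeasurableSet v) :
    Integrable (fun ω => v.indicator (fun _ => (1 : ℝ)) (h ω)) P :=
  .of_bound ((measurable_const.indicator hv).comp hh).aestronglyMeasurable 1
    (Eventually.of_forall fun ω => by by_cases hω : h ω ∈ v <;> simp [hω])

theorem integral_mul_condExp [IsFiniteMeasure P] (hm : m ≤ mΩ)
    {Z I : Ω → ℝ} (hZ : StronglyMeasurable[m] Z) (hI : Integrable I P)
    (hZI : Integrable (Z * I) P) :
    ∫ ω, Z ω * I ω ∂P = ∫ ω, Z ω * (P[I | m]) ω ∂P := by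
  rw [← integral_condExp hm]
  exact integral_congr_ae (condExp_mul_of_stronglyMeasurable_left hZ hZI hI)

end MeasureTheory

namespace OPE

theorem CondIndepGiven.condExp_sup_comap_ae_eq {Ω : Type} {mH : MeasurableSpace Ω}
    [mΩ : MeasurableSpace Ω] {P : Measure Ω} [IsFiniteMeasure P] (hmH : mH ≤ mΩ)
    {β γ : Type*} [MeasurableSpace β] [MeasurableSpace γ] {f : Ω → β} {g : Ω → γ}
    (hf : Measurable f) (hg : Measurable g) (hfg : CondIndepGiven P mH f g)
    {u : Set β} (hu : MeasurableSet u) :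
    P[fun ω => u.indicator (fun _ => (1 : ℝ)) (f ω) | mH ⊔ MeasurableSpace.comap g inferInstance]
      =ᵐ[P] P[fun ω => u.indicator (fun _ => (1 : ℝ)) (f ω) | mH] := by
  set I : Ω → ℝ := fun ω => u.indicator (fun _ => (1 : ℝ)) (f ω)
  have hG : mH ⊔ MeasurableSpace.comap g inferInstance ≤ mΩ := sup_le hmH hg.comap_le
  have hI : Integrable I P := integrable_indicator_one_comp hf hu
  have hD : StronglyMeasurable[mH ⊔ MeasurableSpace.comap g inferInstance] (P[I | mH]) :=
    stronglyMeasurable_condExp.mono le_sup_left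
  refine (ae_eq_condExp_of_forall_setIntegral_eq hG hI
    (fun _ _ _ => integrable_condExp.integrableOn) (fun s hs _ => ?_) hD.aestronglyMeasurable).symm
  refine setIntegral_eq_of_isPiSystem_of_univ_mem hG
    (MeasurableSpace.sup_eq_generateFrom_image2_inter _ _)
    (MeasurableSpace.isPiSystem_image2_inter _ _)
    ⟨univ, MeasurableSet.univ, univ, @MeasurableSet.univ _ (.comap g inferInstance), inter_univ _⟩
    integrable_condExp hI ?_ hs
  rintro _ ⟨H, hH, _, ⟨v, hv, rfl⟩, rfl⟩
  set J : Ω → ℝ := fun ω => v.indicator (fun _ => (1 : ℝ)) (g ω)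
  have hJ_bound : ∀ᵐ ω ∂P, ‖J ω‖ ≤ 1 :=
    Eventually.of_forall fun ω => by by_cases hω : g ω ∈ v <;> simp [J, hω]
  have hJ_meas : AEStronglyMeasurable J P :=
    ((measurable_const.indicator hv).comp hg).aestronglyMeasurable
  have restrict_preimage : ∀ φ : Ω → ℝ,
      ∫ ω in H ∩ g ⁻¹' v, φ ω ∂P = ∫ ω in H, φ ω * J ω ∂P := fun φ => by
    rw [← setIntegral_indicator (hg hv)]
    refine setIntegral_congr_fun (hmH H hH) fun ω _ => ?_
    by_cases hω : g ω ∈ v <;> simp [J, hω]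
  have hDJ : Integrable (P[I | mH] * J) P := integrable_condExp.mul_bdd hJ_meas hJ_bound
  calc ∫ ω in H ∩ g ⁻¹' v, (P[I | mH]) ω ∂P
      = ∫ ω in H, (P[P[I | mH] * J | mH]) ω ∂P := by
        rw [restrict_preimage, setIntegral_condExp hmH hDJ hH]; rfl
    _ = ∫ ω in H, (P[fun ω => I ω * J ω | mH]) ω ∂P := by
        refine setIntegral_congr_ae (hmH H hH) ?_
        filter_upwards [condExp_mul_of_stronglyMeasurable_left stronglyMeasurable_condExp hDJ
          (integrable_indicator_one_comp hg hv), hfg u v hu hv] with ω h₁ h₂ _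
        rw [h₁, h₂]; rfl
    _ = ∫ ω in H ∩ g ⁻¹' v, I ω ∂P := by
        rw [restrict_preimage, setIntegral_condExp hmH (hI.mul_bdd hJ_meas hJ_bound) hH]

theorem CondIndepGiven.integral_mul_indicator_eq {Ω : Type} {mH : MeasurableSpace Ω}
    [mΩ : MeasurableSpace Ω] {P : Measure Ω} [IsFiniteMeasure P] (hmH : mH ≤ mΩ)
    {β γ : Type*} [MeasurableSpace β] [MeasurableSpace γ] {f : Ω → β} {g : Ω → γ}
    (hf : Measurable f) (hg : Measurable g) (hfg : CondIndepGiven P mH f g)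
    {u : Set β} (hu : MeasurableSet u) {p : Ω → ℝ}
    (hp : P[fun ω => u.indicator (fun _ => (1 : ℝ)) (f ω) | mH] =ᵐ[P] p) {Z : Ω → ℝ}
    (hZ : Measurable[mH ⊔ MeasurableSpace.comap g inferInstance] Z) (hZint : Integrable Z P) :
    ∫ ω, Z ω * u.indicator (fun _ => (1 : ℝ)) (f ω) ∂P = ∫ ω, Z ω * p ω ∂P := by
  have hI := integrable_indicator_one_comp (P := P) hf hu
  rw [integral_mul_condExp (sup_le hmH hg.comap_le) hZ.stronglyMeasurable hI
    (hZint.mul_bdd (c := 1) hI.aestronglyMeasurable (Filter.Eventually.of_forall fun ω => by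
      by_cases hω : f ω ∈ u <;> simp [hω]))]
  refine integral_congr_ae ?_
  filter_upwards [hfg.condExp_sup_comap_ae_eq hmH hf hg hu, hp] with ω h₁ h₂
  rw [h₁, h₂]

section Policy

variable {A : ℕ → Type}

/-- `w t b a` is the probability of playing `b` at time `t` after the actions `a`. -/
structure IsPolicy [∀ t, Fintype (A t)] (w : (t : ℕ) → A t → ((s : ℕ) → A s) → ℝ) : Prop where
  causal : ∀ t b (a a' : (s : ℕ) → A s), (∀ s < t, a s = a' s) → w t b a = w t b a'
  nonneg : ∀ t b a, 0 ≤ w t b a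
  sum_eq_one : ∀ t a, ∑ b, w t b a = 1

def detPolicy [∀ t, DecidableEq (A t)] (x : (s : ℕ) → A s) :
    (t : ℕ) → A t → ((s : ℕ) → A s) → ℝ :=
  fun t b _ => if x t = b then 1 else 0

def pathWeight (w : (t : ℕ) → A t → ((s : ℕ) → A s) → ℝ) (a : (s : ℕ) → A s) (n : ℕ) : ℝ :=
  ∏ t ∈ Finset.range n, w t (a t) a

theorem eq_of_pathWeight_detPolicy_ne_zero [∀ t, DecidableEq (A t)] {x a : (s : ℕ) → A s}
    {n : ℕ} (h : pathWeight (detPolicy x) a n ≠ 0) : ∀ s < n, x s = a s := by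
  intro s hs
  by_contra hne
  exact h (Finset.prod_eq_zero (Finset.mem_range.mpr hs) (if_neg hne))

theorem extAct_update_self [∀ t, Nonempty (A t)] {T : ℕ} (aF : (s : Fin T) → A s.1) (i : Fin T)
    (b : A i.1) :
    extAct T (Function.update aF i b) i.1 = b := by
  simp [extAct]

theorem extAct_update_of_ne [∀ t, Nonempty (A t)] {T : ℕ} (aF : (s : Fin T) → A s.1) (i : Fin T)
    (b : A i.1) {t : ℕ} (ht : t ≠ i.1) : extAct T (Function.update aF i b) t = extAct T aF t := by
  unfold extAct
  split_ifs with h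
  · exact Function.update_of_ne (Fin.ne_of_val_ne (i := ⟨t, h⟩) ht) b aF
  · rfl

variable [∀ t, Fintype (A t)] {w : (t : ℕ) → A t → ((s : ℕ) → A s) → ℝ}

theorem isPolicy_detPolicy [∀ t, DecidableEq (A t)] (x : (s : ℕ) → A s) :
    IsPolicy (detPolicy x) where
  causal _ _ _ _ _ := rfl
  nonneg t b _ := by unfold detPolicy; split_ifs <;> norm_num
  sum_eq_one t _ := by simp [detPolicy]

namespace IsPolicy

theorem le_one (hw : IsPolicy w) (t : ℕ) (b : A t) (a : (s : ℕ) → A s) : w t b a ≤ 1 :=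
  (Finset.single_le_sum (fun b' _ => hw.nonneg t b' a) (Finset.mem_univ b)).trans_eq
    (hw.sum_eq_one t a)

theorem abs_prod_le_one (hw : IsPolicy w) (s : Finset ℕ) (a : (s : ℕ) → A s) :
    |∏ t ∈ s, w t (a t) a| ≤ 1 := by
  rw [abs_of_nonneg (Finset.prod_nonneg fun t _ => hw.nonneg t _ a)]
  exact Finset.prod_le_one (fun t _ => hw.nonneg t _ a) fun t _ => hw.le_one t _ a

theorem pathWeight_congr (hw : IsPolicy w) {a a' : (s : ℕ) → A s} {n : ℕ}
    (h : ∀ s < n, a s = a' s) : pathWeight w a n = pathWeight w a' n := by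
  refine Finset.prod_congr rfl fun t ht => ?_
  have ht : t < n := Finset.mem_range.mp ht
  rw [h t ht, hw.causal t _ a a' fun s hs => h s (hs.trans ht)]

variable [∀ t, Nonempty (A t)] {T : ℕ}

theorem sum_mul_pathWeight_succ_eq (hw : IsPolicy w) {v : (t : ℕ) → A t → ℝ}
    (hv : ∀ t, ∑ b, v t b = 1) {F : ((s : ℕ) → A s) → ℝ} {m : ℕ} (hmT : m < T)
    (hF : ∀ a a' : (s : ℕ) → A s, (∀ s < m, a s = a' s) → F a = F a') :
    ∑ aF : (s : Fin T) → A s.1, F (extAct T aF) * pathWeight w (extAct T aF) (m + 1) *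
        ∏ t ∈ Finset.Ico (m + 1) T, v t (extAct T aF t)
      = ∑ aF : (s : Fin T) → A s.1, F (extAct T aF) * pathWeight w (extAct T aF) m *
        ∏ t ∈ Finset.Ico m T, v t (extAct T aF t) := by
  let i : Fin T := ⟨m, hmT⟩
  have update_ne : ∀ (aF : (s : Fin T) → A s.1) (b : A m) t, t ≠ m →
      extAct T (Function.update aF i b) t = extAct T aF t :=
    fun aF b t ht => extAct_update_of_ne aF i b ht
  calc ∑ aF : (s : Fin T) → A s.1, F (extAct T aF) * pathWeight w (extAct T aF) (m + 1) *
        ∏ t ∈ Finset.Ico (m + 1) T, v t (extAct T aF t)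
      = ∑ aF : (s : Fin T) → A s.1, (F (extAct T aF) * pathWeight w (extAct T aF) m *
          ∏ t ∈ Finset.Ico (m + 1) T, v t (extAct T aF t)) * w m (extAct T aF m) (extAct T aF) := by
        refine Finset.sum_congr rfl fun aF _ => ?_
        rw [pathWeight, Finset.prod_range_succ, ← pathWeight]
        ring
    _ = ∑ aF : (s : Fin T) → A s.1, (F (extAct T aF) * pathWeight w (extAct T aF) m *
          ∏ t ∈ Finset.Ico (m + 1) T, v t (extAct T aF t)) * v m (extAct T aF m) := by
        -- only the last factor depends on the action at time `m`, and it sums to one over it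
        refine Fintype.sum_mul_eq_sum_mul_of_sum_update_eq i (fun aF b => ?_) fun aF => ?_
        · rw [hF _ _ fun s hs => update_ne aF b s hs.ne,
            hw.pathWeight_congr fun s hs => update_ne aF b s hs.ne,
            Finset.prod_congr rfl fun t ht => by
              rw [update_ne aF b t (by have := (Finset.mem_Ico.mp ht).1; omega)]]
        · have update_self : ∀ b : A m, extAct T (Function.update aF i b) m = b :=
            extAct_update_self aF i
          simp only [update_self]
          rw [hv m]
          calc ∑ b, w m b (extAct T (Function.update aF i b))
              = ∑ b, w m b (extAct T aF) := Finset.sum_congr rfl fun b _ =>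
                hw.causal m b _ _ fun s hs => update_ne aF b s hs.ne
            _ = 1 := hw.sum_eq_one m _
    _ = ∑ aF : (s : Fin T) → A s.1, F (extAct T aF) * pathWeight w (extAct T aF) m *
          ∏ t ∈ Finset.Ico m T, v t (extAct T aF t) := by
        refine Finset.sum_congr rfl fun aF _ => ?_
        rw [Finset.prod_eq_prod_Ico_succ_bot hmT]
        ring

theorem sum_mul_pathWeight_eq (hw : IsPolicy w) {v : (t : ℕ) → A t → ℝ}
    (hv : ∀ t, ∑ b, v t b = 1) {F : ((s : ℕ) → A s) → ℝ} {n : ℕ} (hnT : n ≤ T)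
    (hF : ∀ a a' : (s : ℕ) → A s, (∀ s < n, a s = a' s) → F a = F a') :
    ∑ aF : (s : Fin T) → A s.1, F (extAct T aF) * pathWeight w (extAct T aF) T
      = ∑ aF : (s : Fin T) → A s.1, F (extAct T aF) * pathWeight w (extAct T aF) n *
          ∏ t ∈ Finset.Ico n T, v t (extAct T aF t) := by
  suffices h : ∀ m, n ≤ m → m ≤ T →
      ∑ aF : (s : Fin T) → A s.1, F (extAct T aF) * pathWeight w (extAct T aF) m *
          ∏ t ∈ Finset.Ico m T, v t (extAct T aF t)
        = ∑ aF : (s : Fin T) → A s.1, F (extAct T aF) * pathWeight w (extAct T aF) n *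
          ∏ t ∈ Finset.Ico n T, v t (extAct T aF t) by
    simpa using h T hnT le_rfl
  intro m hm
  induction m, hm using Nat.le_induction with
  | base => exact fun _ => rfl
  | succ m hnm ih =>
    intro hmT
    rw [hw.sum_mul_pathWeight_succ_eq hv hmT fun a a' h => hF a a' fun s hs => h s (by omega),
      ih (by omega)]

end IsPolicy

theorem sum_mul_pathWeight_detPolicy [∀ t, Nonempty (A t)] [∀ t, DecidableEq (A t)] {T : ℕ}
    (x : (s : ℕ) → A s) {F : ((s : ℕ) → A s) → ℝ}
    (hF : ∀ a a' : (s : ℕ) → A s, (∀ s < T, a s = a' s) → F a = F a') :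
    ∑ aF : (s : Fin T) → A s.1, F (extAct T aF) * pathWeight (detPolicy x) (extAct T aF) T
      = F x := by
  have indicator : ∀ aF : (s : Fin T) → A s.1, pathWeight (detPolicy x) (extAct T aF) T
      = if (fun s : Fin T => x s) = aF then 1 else 0 := by
    intro aF
    simp only [pathWeight, detPolicy]
    rw [Finset.prod_ite_zero, Finset.prod_const_one]
    congr 1
    simp only [Finset.mem_range, funext_iff, Fin.forall_iff]
    exact propext ⟨fun h s hs => by simpa [extAct, hs] using h s hs,
      fun h s hs => by simpa [extAct, hs] using h s hs⟩
  simp only [indicator, mul_ite, mul_one, mul_zero, Finset.sum_ite_eq, Finset.mem_univ, if_true]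
  exact hF _ _ fun s hs => by simp [extAct, hs]

end Policy

section Measurability

variable {Ω 𝒮 : Type} [MeasurableSpace 𝒮] {A : ℕ → Type} {S : ℕ → ((s : ℕ) → A s) → Ω → 𝒮}
  {R : ℕ → ((s : ℕ) → A s) → Ω → ℝ} {Abar : (t : ℕ) → Ω → A t}

theorem histC_mono {t t' : ℕ} (h : t ≤ t') (a : (s : ℕ) → A s) : histC S t a ≤ histC S t' a :=
  biSup_mono fun r hr => Finset.mem_range.mpr <| (Finset.mem_range.mp hr).trans_le (by omega)

theorem histC_le_comap_pi (t : ℕ) (a : (s : ℕ) → A s) :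
    histC S t a ≤ MeasurableSpace.comap (fun ω (r : Fin (t + 1)) => S r a ω) inferInstance := by
  refine iSup₂_le fun r hr => ?_
  have hr : r < t + 1 := Finset.mem_range.mp hr
  rw [show S r a = (fun v : Fin (t + 1) → 𝒮 => v ⟨r, hr⟩) ∘ fun ω r' => S r'.1 a ω from rfl,
    ← MeasurableSpace.comap_comp]
  exact MeasurableSpace.comap_mono (measurable_pi_apply _).comap_le

theorem measurable_R_comap_Wfut {T j s : ℕ} (hjs : j ≤ s) (hsT : s < T) (a : (s : ℕ) → A s) :
    Measurable[MeasurableSpace.comap (Wfut S R T j) inferInstance] (R s a) := by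
  have h : Measurable fun y : (((s : ℕ) → A s) → {s : ℕ // j ≤ s ∧ s < T} → ℝ) ×
      (((s : ℕ) → A s) → {s : ℕ // j < s ∧ s < T} → 𝒮) => y.1 a ⟨s, hjs, hsT⟩ := by
    fun_prop
  exact h.comp (comap_measurable _)

theorem measurable_S_comap_Wfut {T j r : ℕ} (hjr : j < r) (hrT : r < T) (a : (s : ℕ) → A s) :
    Measurable[MeasurableSpace.comap (Wfut S R T j) inferInstance] (S r a) := by
  have h : Measurable fun y : (((s : ℕ) → A s) → {s : ℕ // j ≤ s ∧ s < T} → ℝ) ×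
      (((s : ℕ) → A s) → {s : ℕ // j < s ∧ s < T} → 𝒮) => y.2 a ⟨r, hjr, hrT⟩ := by
    fun_prop
  exact h.comp (comap_measurable _)

section

variable [mΩ : MeasurableSpace Ω]

theorem histC_le (hS : ∀ t a, Measurable (S t a)) (t : ℕ) (a : (s : ℕ) → A s) :
    histC S t a ≤ mΩ :=
  iSup₂_le fun r _ => (hS r a).comap_le

theorem measurable_Wfut (hS : ∀ t a, Measurable (S t a)) (hR : ∀ t a, Measurable (R t a))
    (T t : ℕ) : Measurable (Wfut S R T t) :=
  .prodMk (measurable_pi_lambda _ fun a => measurable_pi_lambda _ fun s => hR s.1 a)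
    (measurable_pi_lambda _ fun a => measurable_pi_lambda _ fun s => hS s.1 a)

end

variable [∀ t, MeasurableSpace (A t)]

theorem measurable_seqOf_comap_hist {r j : ℕ} (hrj : r ≤ j) :
    Measurable[hist S Abar j] fun ω => S r (seqOf Abar ω) ω :=
  (comap_measurable _).mono (le_iSup₂_of_le (f := fun s (_ : s ∈ Finset.range (j + 1)) =>
    MeasurableSpace.comap (fun ω => S s (seqOf Abar ω) ω) inferInstance) r
    (Finset.mem_range.mpr (Nat.lt_succ_of_le hrj)) le_rfl |>.trans le_sup_left) le_rfl

theorem measurable_pathWeight_detPolicy [∀ t, Finite (A t)] [∀ t, DecidableEq (A t)]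
    [∀ t, MeasurableSingletonClass (A t)] (a : (s : ℕ) → A s) (j : ℕ) :
    Measurable[hist S Abar j] fun ω => pathWeight (detPolicy (seqOf Abar ω)) a j := by
  refine Finset.measurable_prod _ fun t ht => ?_
  have h_le : MeasurableSpace.comap (Abar t) inferInstance ≤ hist S Abar j :=
    le_iSup₂_of_le (f := fun s (_ : s ∈ Finset.range j) =>
      MeasurableSpace.comap (Abar s) inferInstance) t ht le_rfl |>.trans le_sup_right
  exact ((measurable_of_finite fun x : A t => if x = a t then (1 : ℝ) else 0).comp
    (comap_measurable (Abar t))).mono h_le le_rfl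

/-- On the event that `Ā` has followed `a` before time `j`, the states along `a` up to time `j`
are the observed ones and the later ones are future potential outcomes. -/
theorem measurable_pathWeight_detPolicy_mul [∀ t, Finite (A t)] [∀ t, DecidableEq (A t)]
    [∀ t, MeasurableSingletonClass (A t)]
    (hSpre : ∀ t (a a' : (s : ℕ) → A s), (∀ s, s < t → a s = a' s) → S t a = S t a')
    {T j s : ℕ} (hsT : s < T) {a : (s : ℕ) → A s} {f : Ω → ℝ} (hf : Measurable[histC S s a] f) :
    Measurable[hist S Abar j ⊔ MeasurableSpace.comap (Wfut S R T j) inferInstance]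
      fun ω => pathWeight (detPolicy (seqOf Abar ω)) a j * f ω := by
  obtain ⟨h, hh, rfl⟩ := (hf.mono (histC_le_comap_pi s a) le_rfl).exists_eq_measurable_comp
  let V : Ω → Fin (s + 1) → 𝒮 := fun ω r => if r.1 ≤ j then S r (seqOf Abar ω) ω else S r a ω
  have hV : Measurable[hist S Abar j ⊔ MeasurableSpace.comap (Wfut S R T j) inferInstance] V := by
    refine @measurable_pi_lambda _ _ _ (_ ⊔ _) _ _ fun r => ?_
    by_cases hr : r.1 ≤ j
    · simp only [V, hr, if_true]
      exact (measurable_seqOf_comap_hist hr).mono le_sup_left le_rfl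
    · simp only [V, hr, if_false]
      exact (measurable_S_comap_Wfut (not_le.mp hr) (by omega) a).mono le_sup_right le_rfl
  have hV_eq : ∀ ω, pathWeight (detPolicy (seqOf Abar ω)) a j ≠ 0 →
      V ω = fun r : Fin (s + 1) => S r a ω := by
    intro ω hω
    funext r
    by_cases hr : r.1 ≤ j
    · simp only [V, hr, if_true]
      exact congrFun (hSpre r _ _ fun t ht =>
        eq_of_pathWeight_detPolicy_ne_zero hω t (by omega)) ω
    · simp only [V, hr, if_false]
  have h_eq : (fun ω => pathWeight (detPolicy (seqOf Abar ω)) a j * (h ∘ fun ω r => S r a ω) ω)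
      = fun ω => pathWeight (detPolicy (seqOf Abar ω)) a j * h (V ω) := by
    funext ω
    by_cases hω : pathWeight (detPolicy (seqOf Abar ω)) a j = 0
    · simp [hω]
    · rw [hV_eq ω hω]; rfl
  rw [h_eq]
  exact ((measurable_pathWeight_detPolicy a j).mono le_sup_left le_rfl).mul (hh.comp hV)

variable [mΩ : MeasurableSpace Ω]

theorem measurable_S_seqOf [∀ t, Nonempty (A t)] [∀ t, Countable (A t)]
    [∀ t, MeasurableSingletonClass (A t)] (hS : ∀ t a, Measurable (S t a))
    (hSpre : ∀ t (a a' : (s : ℕ) → A s), (∀ s, s < t → a s = a' s) → S t a = S t a')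
    (hAbar : ∀ t, Measurable (Abar t)) (r : ℕ) :
    Measurable fun ω => S r (seqOf Abar ω) ω := by
  have h : (fun ω => S r (seqOf Abar ω) ω)
      = (fun p : Ω × ((s : Fin r) → A s.1) => S r (extAct r p.2) p.1)
          ∘ fun ω => (ω, fun s : Fin r => Abar s.1 ω) := by
    funext ω
    exact congrFun (hSpre r _ _ fun s hs => by simp [seqOf, extAct, hs]) ω
  rw [h]
  exact (measurable_from_prod_countable_left fun aF => hS r (extAct r aF)).comp
    (measurable_id.prodMk (measurable_pi_lambda _ fun s => hAbar s.1))

theorem hist_le [∀ t, Nonempty (A t)] [∀ t, Countable (A t)]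
    [∀ t, MeasurableSingletonClass (A t)] (hS : ∀ t a, Measurable (S t a))
    (hSpre : ∀ t (a a' : (s : ℕ) → A s), (∀ s, s < t → a s = a' s) → S t a = S t a')
    (hAbar : ∀ t, Measurable (Abar t)) (j : ℕ) : hist S Abar j ≤ mΩ :=
  sup_le (iSup₂_le fun r _ => (measurable_S_seqOf hS hSpre hAbar r).comap_le)
    (iSup₂_le fun t _ => (hAbar t).comap_le)

theorem measurable_detPolicy_seqOf [∀ t, Finite (A t)] [∀ t, DecidableEq (A t)]
    [∀ t, MeasurableSingletonClass (A t)] (hAbar : ∀ t, Measurable (Abar t)) (t : ℕ) (b : A t)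
    (a : (s : ℕ) → A s) : Measurable fun ω => detPolicy (seqOf Abar ω) t b a :=
  (measurable_of_finite fun x : A t => if x = b then (1 : ℝ) else 0).comp (hAbar t)

end Measurability

section Integrals

variable {Ω : Type} {A : ℕ → Type} {R : ℕ → ((s : ℕ) → A s) → Ω → ℝ} {T : ℕ}

theorem ret_congr (hRpre : ∀ t (a a' : (s : ℕ) → A s), (∀ s, s ≤ t → a s = a' s) → R t a = R t a')
    (γ : ℝ) {a a' : (s : ℕ) → A s} (h : ∀ s < T, a s = a' s) : ret R γ T a = ret R γ T a' := by
  funext ω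
  refine Finset.sum_congr rfl fun t ht => ?_
  rw [hRpre t a a' fun s hs => h s (hs.trans_lt (Finset.mem_range.mp ht))]

variable [MeasurableSpace Ω] {P : Measure Ω}

theorem integrable_ret (hRint : ∀ t a, Integrable (R t a) P) (γ : ℝ) (a : (s : ℕ) → A s) :
    Integrable (ret R γ T a) P :=
  integrable_finsetSum _ fun t _ => (hRint t a).const_mul _

theorem sum_integral_ret_mul_eq {ι : Type*} [Fintype ι] (γ : ℝ) (a : ι → (s : ℕ) → A s)
    (c : ι → Ω → ℝ) (h : ∀ i s, Integrable (fun ω => R s (a i) ω * c i ω) P) :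
    ∑ i, ∫ ω, ret R γ T (a i) ω * c i ω ∂P
      = ∑ s ∈ Finset.range T, γ ^ s * ∑ i, ∫ ω, R s (a i) ω * c i ω ∂P := by
  simp_rw [Finset.mul_sum, ← integral_const_mul]
  rw [Finset.sum_comm]
  refine Finset.sum_congr rfl fun i _ => ?_
  rw [← integral_finsetSum _ fun s _ => (h i s).const_mul _]
  refine integral_congr_ae (Filter.Eventually.of_forall fun ω => ?_)
  simp only [ret, Finset.sum_mul, mul_assoc]

variable [∀ t, Fintype (A t)]

theorem integrable_mul_pathWeight {w : Ω → (t : ℕ) → A t → ((s : ℕ) → A s) → ℝ}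
    (hw : ∀ ω, IsPolicy (w ω)) (hw_meas : ∀ t b a, Measurable fun ω => w ω t b a)
    {X : Ω → ℝ} (hX : Integrable X P) (a : (s : ℕ) → A s) (n : ℕ) :
    Integrable (fun ω => X ω * pathWeight (w ω) a n) P :=
  hX.mul_bdd (c := 1) (Finset.measurable_prod _ fun t _ => hw_meas t (a t) a).aestronglyMeasurable
    (Filter.Eventually.of_forall fun ω => (hw ω).abs_prod_le_one _ a)

theorem sum_integral_mul_pathWeight_eq [∀ t, Nonempty (A t)]
    {w : Ω → (t : ℕ) → A t → ((s : ℕ) → A s) → ℝ} (hw : ∀ ω, IsPolicy (w ω))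
    (hw_meas : ∀ t b a, Measurable fun ω => w ω t b a) {v : (t : ℕ) → A t → ℝ}
    (hv : ∀ t, ∑ b, v t b = 1) {X : ((s : ℕ) → A s) → Ω → ℝ} (hX : ∀ a, Integrable (X a) P)
    {n : ℕ} (hnT : n ≤ T) (hX_congr : ∀ a a' : (s : ℕ) → A s, (∀ s < n, a s = a' s) → X a = X a') :
    ∑ aF : (s : Fin T) → A s.1, ∫ ω, X (extAct T aF) ω * pathWeight (w ω) (extAct T aF) T ∂P
      = ∑ aF : (s : Fin T) → A s.1, (∫ ω, X (extAct T aF) ω * pathWeight (w ω) (extAct T aF) n ∂P)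
          * ∏ t ∈ Finset.Ico n T, v t (extAct T aF t) := by
  simp_rw [← integral_mul_const]
  rw [← integral_finsetSum _ fun aF _ => integrable_mul_pathWeight hw hw_meas (hX _) _ _,
    ← integral_finsetSum _ fun aF _ =>
      (integrable_mul_pathWeight hw hw_meas (hX _) _ _).mul_const _]
  refine integral_congr_ae (Filter.Eventually.of_forall fun ω => ?_)
  exact (hw ω).sum_mul_pathWeight_eq hv hnT fun a a' h => congrFun (hX_congr a a' h) ω

end Integrals

section Identification

variable {Ω 𝒮 : Type} [mΩ : MeasurableSpace Ω] [MeasurableSpace 𝒮] {A : ℕ → Type}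
  [∀ t, Fintype (A t)] [∀ t, DecidableEq (A t)] [∀ t, MeasurableSpace (A t)]
  [∀ t, MeasurableSingletonClass (A t)] {P : Measure Ω} [IsFiniteMeasure P]
  {S : ℕ → ((s : ℕ) → A s) → Ω → 𝒮} {R : ℕ → ((s : ℕ) → A s) → Ω → ℝ}
  {Abar : (t : ℕ) → Ω → A t} {πbar : (t : ℕ) → A t → ((s : ℕ) → A s) → Ω → ℝ} {T j s : ℕ}

theorem SeqIgnorableAt.integral_pathWeight_mul_detPolicy_eq
    (hIg : SeqIgnorableAt P S R T Abar j) (hjT : j < T) (hGen : GeneratedBy P S T Abar πbar)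
    (hπ : ∀ ω, IsPolicy fun t b a => πbar t b a ω) (hmH : hist S Abar j ≤ mΩ)
    (hW : Measurable (Wfut S R T j)) (hAj : Measurable (Abar j)) (a : (s : ℕ) → A s)
    {Y : Ω → ℝ} (hY : Integrable Y P)
    (hEY : Measurable[hist S Abar j ⊔ MeasurableSpace.comap (Wfut S R T j) inferInstance]
      fun ω => pathWeight (detPolicy (seqOf Abar ω)) a j * Y ω) :
    ∫ ω, pathWeight (detPolicy (seqOf Abar ω)) a j * Y ω * detPolicy (seqOf Abar ω) j (a j) a ∂P
      = ∫ ω, pathWeight (detPolicy (seqOf Abar ω)) a j * Y ω * πbar j (a j) a ω ∂P := by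
  have indicator_eq : ∀ ω, ({a j} : Set (A j)).indicator (fun _ => (1 : ℝ)) (Abar j ω)
      = detPolicy (seqOf Abar ω) j (a j) a := fun ω => by
    simp only [Set.indicator_apply, Set.mem_singleton_iff]; rfl
  have hZ : Integrable (fun ω => pathWeight (detPolicy (seqOf Abar ω)) a j * Y ω) P :=
    hY.bdd_mul ((measurable_pathWeight_detPolicy a j).mono hmH le_rfl).aestronglyMeasurable
      (Filter.Eventually.of_forall fun ω =>
        (isPolicy_detPolicy (seqOf Abar ω)).abs_prod_le_one _ a)
  have h := CondIndepGiven.integral_mul_indicator_eq hmH hAj hW hIg (measurableSet_singleton (a j))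
    (p := fun ω => πbar j (a j) (seqOf Abar ω) ω)
    (by simp only [indicator_eq]; exact hGen j hjT (a j)) hEY hZ
  simp only [indicator_eq] at h
  rw [h]
  refine integral_congr_ae (Filter.Eventually.of_forall fun ω => ?_)
  -- where the weight is nonzero, `Ā` has followed `a` before `j`, so `π̄_j` sees the same history
  by_cases hω : pathWeight (detPolicy (seqOf Abar ω)) a j = 0
  · simp [hω]
  · dsimp only
    rw [(hπ ω).causal j (a j) _ a (eq_of_pathWeight_detPolicy_ne_zero hω)]

theorem integral_mul_pathWeight_detPolicy_succ_eq [∀ t, Nonempty (A t)]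
    (hS : ∀ t a, Measurable (S t a)) (hR : ∀ t a, Measurable (R t a))
    (hSpre : ∀ t (a a' : (s : ℕ) → A s), (∀ s, s < t → a s = a' s) → S t a = S t a')
    (hRint : ∀ t a, Integrable (R t a) P) (hπ : ∀ ω, IsPolicy fun t b a => πbar t b a ω)
    (hπbarMeas : ∀ t (b : A t) (a : (s : ℕ) → A s), Measurable[histC S t a] (πbar t b a))
    (hAbar : ∀ t, Measurable (Abar t)) (hGen : GeneratedBy P S T Abar πbar)
    (hIg : SeqIgnorableAt P S R T Abar j) (hjs : j ≤ s) (hsT : s < T) (a : (s : ℕ) → A s) :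
    ∫ ω, R s a ω * (pathWeight (detPolicy (seqOf Abar ω)) a (j + 1) *
        ∏ t ∈ Finset.Ico (j + 1) (s + 1), πbar t (a t) a ω) ∂P
      = ∫ ω, R s a ω * (pathWeight (detPolicy (seqOf Abar ω)) a j *
        ∏ t ∈ Finset.Ico j (s + 1), πbar t (a t) a ω) ∂P := by
  let Q : Ω → ℝ := fun ω => ∏ t ∈ Finset.Ico (j + 1) (s + 1), πbar t (a t) a ω
  have hQ : Measurable[histC S s a] Q :=
    Finset.measurable_prod (f := fun t ω => πbar t (a t) a ω) _ fun t ht =>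
      (hπbarMeas t (a t) a).mono (histC_mono (by have := (Finset.mem_Ico.mp ht).2; omega) a)
        le_rfl
  have hRQ : Integrable (fun ω => R s a ω * Q ω) P :=
    (hRint s a).mul_bdd (c := 1) (hQ.mono (histC_le hS s a) le_rfl).aestronglyMeasurable
      (Filter.Eventually.of_forall fun ω => (hπ ω).abs_prod_le_one _ a)
  have hEQR : Measurable[hist S Abar j ⊔ MeasurableSpace.comap (Wfut S R T j) inferInstance]
      fun ω => pathWeight (detPolicy (seqOf Abar ω)) a j * (R s a ω * Q ω) := by
    have h := (measurable_pathWeight_detPolicy_mul (R := R) (Abar := Abar) hSpre hsT hQ).mul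
      ((measurable_R_comap_Wfut hjs hsT a).mono le_sup_right le_rfl)
    convert h using 1
    funext ω
    simp only [Pi.mul_apply]
    ring
  calc ∫ ω, R s a ω * (pathWeight (detPolicy (seqOf Abar ω)) a (j + 1) * Q ω) ∂P
      = ∫ ω, pathWeight (detPolicy (seqOf Abar ω)) a j * (R s a ω * Q ω) *
          detPolicy (seqOf Abar ω) j (a j) a ∂P := by
        refine integral_congr_ae (Filter.Eventually.of_forall fun ω => ?_)
        simp only [pathWeight, Finset.prod_range_succ]
        ring
    _ = ∫ ω, pathWeight (detPolicy (seqOf Abar ω)) a j * (R s a ω * Q ω) *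
          πbar j (a j) a ω ∂P :=
        hIg.integral_pathWeight_mul_detPolicy_eq (hjs.trans_lt hsT) hGen hπ
          (hist_le hS hSpre hAbar j) (measurable_Wfut hS hR T j) (hAbar j) a hRQ hEQR
    _ = ∫ ω, R s a ω * (pathWeight (detPolicy (seqOf Abar ω)) a j *
          ∏ t ∈ Finset.Ico j (s + 1), πbar t (a t) a ω) ∂P := by
        refine integral_congr_ae (Filter.Eventually.of_forall fun ω => ?_)
        simp only [Q, Finset.prod_eq_prod_Ico_succ_bot (Nat.lt_succ_of_le hjs)]
        ring

theorem integral_mul_pathWeight_detPolicy_eq [∀ t, Nonempty (A t)]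
    (hS : ∀ t a, Measurable (S t a)) (hR : ∀ t a, Measurable (R t a))
    (hSpre : ∀ t (a a' : (s : ℕ) → A s), (∀ s, s < t → a s = a' s) → S t a = S t a')
    (hRint : ∀ t a, Integrable (R t a) P) (hπ : ∀ ω, IsPolicy fun t b a => πbar t b a ω)
    (hπbarMeas : ∀ t (b : A t) (a : (s : ℕ) → A s), Measurable[histC S t a] (πbar t b a))
    (hAbar : ∀ t, Measurable (Abar t)) (hGen : GeneratedBy P S T Abar πbar)
    (hIg : ∀ t < T, SeqIgnorableAt P S R T Abar t) (hsT : s < T) (a : (s : ℕ) → A s) :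
    ∫ ω, R s a ω * pathWeight (detPolicy (seqOf Abar ω)) a (s + 1) ∂P
      = ∫ ω, R s a ω * pathWeight (fun t b a => πbar t b a ω) a (s + 1) ∂P := by
  suffices h : ∀ j ≤ s + 1, ∫ ω, R s a ω * (pathWeight (detPolicy (seqOf Abar ω)) a j *
      ∏ t ∈ Finset.Ico j (s + 1), πbar t (a t) a ω) ∂P
        = ∫ ω, R s a ω * pathWeight (fun t b a => πbar t b a ω) a (s + 1) ∂P by
    simpa using h (s + 1) le_rfl
  intro j hj
  induction j with
  | zero => simp only [pathWeight, Finset.range_eq_Ico, Finset.Ico_self, Finset.prod_empty, one_mul]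
  | succ j ih =>
    rw [integral_mul_pathWeight_detPolicy_succ_eq hS hR hSpre hRint hπ hπbarMeas hAbar hGen
      (hIg j (by omega)) (by omega) hsT a, ih (by omega)]

theorem sum_integral_mul_pathWeight_detPolicy_eq [∀ t, Nonempty (A t)]
    (hS : ∀ t a, Measurable (S t a)) (hR : ∀ t a, Measurable (R t a))
    (hSpre : ∀ t (a a' : (s : ℕ) → A s), (∀ s, s < t → a s = a' s) → S t a = S t a')
    (hRpre : ∀ t (a a' : (s : ℕ) → A s), (∀ s, s ≤ t → a s = a' s) → R t a = R t a')
    (hRint : ∀ t a, Integrable (R t a) P) (hπ : ∀ ω, IsPolicy fun t b a => πbar t b a ω)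
    (hπbarMeas : ∀ t (b : A t) (a : (s : ℕ) → A s), Measurable[histC S t a] (πbar t b a))
    (hAbar : ∀ t, Measurable (Abar t)) (hGen : GeneratedBy P S T Abar πbar)
    (hIg : ∀ t < T, SeqIgnorableAt P S R T Abar t) (hsT : s < T) :
    ∑ aF : (t : Fin T) → A t.1,
        ∫ ω, R s (extAct T aF) ω * pathWeight (detPolicy (seqOf Abar ω)) (extAct T aF) T ∂P
      = ∑ aF : (t : Fin T) → A t.1,
        ∫ ω, R s (extAct T aF) ω * pathWeight (fun t b a => πbar t b a ω) (extAct T aF) T ∂P := by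
  -- any fixed probability vectors `v t` would do: both sides are reduced with the same ones
  let v : (t : ℕ) → A t → ℝ := fun t b => if b = Classical.arbitrary (A t) then 1 else 0
  have hv : ∀ t, ∑ b, v t b = 1 := fun t => by simp [v]
  have hR_congr : ∀ a a' : (s : ℕ) → A s, (∀ t < s + 1, a t = a' t) → R s a = R s a' :=
    fun a a' h => hRpre s a a' fun t ht => h t (Nat.lt_succ_of_le ht)
  rw [sum_integral_mul_pathWeight_eq (fun ω => isPolicy_detPolicy (seqOf Abar ω))
      (measurable_detPolicy_seqOf hAbar) hv (hRint s) hsT hR_congr,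
    sum_integral_mul_pathWeight_eq hπ
      (fun t b a => (hπbarMeas t b a).mono (histC_le hS t a) le_rfl) hv (hRint s) hsT hR_congr]
  refine Finset.sum_congr rfl fun aF _ => ?_
  rw [integral_mul_pathWeight_detPolicy_eq hS hR hSpre hRint hπ hπbarMeas hAbar hGen hIg hsT]

end Identification

theorem evaluation_policy_value_representation_general
    {Ω 𝒮 : Type} [m : MeasurableSpace Ω] [MeasurableSpace 𝒮]
    {A : ℕ → Type} [∀ t, Fintype (A t)] [∀ t, Nonempty (A t)]
    [∀ t, DecidableEq (A t)] [∀ t, MeasurableSpace (A t)]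
    [∀ t, MeasurableSingletonClass (A t)]
    (P : Measure Ω) [IsProbabilityMeasure P]
    (T : ℕ) (γ : ℝ)
    -- potential outcomes: states and integrable rewards, depending only on past actions
    (S : ℕ → ((s : ℕ) → A s) → Ω → 𝒮) (R : ℕ → ((s : ℕ) → A s) → Ω → ℝ)
    (hSmeas : ∀ t a, Measurable (S t a)) (hRmeas : ∀ t a, Measurable (R t a))
    (hSpre : ∀ t (a a' : (s : ℕ) → A s), (∀ s, s < t → a s = a' s) → S t a = S t a')
    (hRpre : ∀ t (a a' : (s : ℕ) → A s), (∀ s, s ≤ t → a s = a' s) → R t a = R t a')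
    (hRint : ∀ t a, Integrable (R t a) P)
    -- the evaluation policy π̄ and the actions Ā it generates
    (πbar : (t : ℕ) → A t → ((s : ℕ) → A s) → Ω → ℝ)
    (hπbarPre : ∀ t (b : A t) (a a' : (s : ℕ) → A s),
      (∀ s, s < t → a s = a' s) → πbar t b a = πbar t b a')
    (hπbarMeas : ∀ t (b : A t) (a : (s : ℕ) → A s), Measurable[histC S t a] (πbar t b a))
    (hπbarNonneg : ∀ t (b : A t) (a : (s : ℕ) → A s) (ω : Ω), 0 ≤ πbar t b a ω)
    (hπbarSum : ∀ t (a : (s : ℕ) → A s) (ω : Ω), (∑ b : A t, πbar t b a ω) = 1)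
    (Abar : (t : ℕ) → Ω → A t) (hAbar : ∀ t, Measurable (Abar t))
    (hGen : GeneratedBy P S T Abar πbar)
    -- sequential ignorability of the evaluation policy
    (hIgEval : ∀ t < T, SeqIgnorableAt P S R T Abar t)
 :
    ∫ ω, ret R γ T (seqOf Abar ω) ω ∂P
      = ∑ aF : (s : Fin T) → A s.1,
          ∫ ω, ret R γ T (extAct T aF) ω *
              ∏ t ∈ Finset.range T, πbar t (extAct T aF t) (extAct T aF) ω ∂P := by
  have hπ : ∀ ω, IsPolicy fun t b a => πbar t b a ω := fun ω =>
    ⟨fun t b a a' h => congrFun (hπbarPre t b a a' h) ω, fun t b a => hπbarNonneg t b a ω,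
      fun t a => hπbarSum t a ω⟩
  have hπ_meas : ∀ t (b : A t) a, Measurable fun ω => πbar t b a ω :=
    fun t b a => (hπbarMeas t b a).mono (histC_le hSmeas t a) le_rfl
  have hdet := fun ω => isPolicy_detPolicy (seqOf Abar ω)
  have hdet_meas := measurable_detPolicy_seqOf hAbar
  calc ∫ ω, ret R γ T (seqOf Abar ω) ω ∂P
      = ∑ aF : (s : Fin T) → A s.1, ∫ ω,
          ret R γ T (extAct T aF) ω * pathWeight (detPolicy (seqOf Abar ω)) (extAct T aF) T ∂P := by
        rw [← integral_finsetSum _ fun aF _ =>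
          integrable_mul_pathWeight hdet hdet_meas (integrable_ret hRint γ _) _ _]
        refine integral_congr_ae (Filter.Eventually.of_forall fun ω => ?_)
        exact (sum_mul_pathWeight_detPolicy _ fun a a' h => congrFun (ret_congr hRpre γ h) ω).symm
    _ = ∑ s ∈ Finset.range T, γ ^ s * ∑ aF : (s : Fin T) → A s.1, ∫ ω,
          R s (extAct T aF) ω * pathWeight (detPolicy (seqOf Abar ω)) (extAct T aF) T ∂P :=
        sum_integral_ret_mul_eq γ _ _ fun aF s =>
          integrable_mul_pathWeight hdet hdet_meas (hRint s _) _ _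
    _ = ∑ s ∈ Finset.range T, γ ^ s * ∑ aF : (s : Fin T) → A s.1, ∫ ω,
          R s (extAct T aF) ω * pathWeight (fun t b a => πbar t b a ω) (extAct T aF) T ∂P := by
        refine Finset.sum_congr rfl fun s hs => ?_
        rw [sum_integral_mul_pathWeight_detPolicy_eq hSmeas hRmeas hSpre hRpre hRint hπ hπbarMeas
          hAbar hGen hIgEval (Finset.mem_range.mp hs)]
    _ = _ := (sum_integral_ret_mul_eq γ _ _ fun aF s =>
          integrable_mul_pathWeight hπ hπ_meas (hRint s _) _ _).symm

/-- **Value representation for a sequentially ignorable evaluation policy**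
(Lemma `cand-identity`): `E[Y(Ā_{1:T})] = ∑_{a_{1:T}} E[Y(a_{1:T}) ∏_t π̄_t(a_t ∣ H̄_t(a_{1:t-1}))]`. -/
theorem evaluation_policy_value_representation
    {Ω 𝒮 : Type} [m : MeasurableSpace Ω] [MeasurableSpace 𝒮]
    {A : ℕ → Type} [∀ t, Fintype (A t)] [∀ t, Nonempty (A t)]
    [∀ t, DecidableEq (A t)] [∀ t, MeasurableSpace (A t)]
    [∀ t, MeasurableSingletonClass (A t)]
    (P : Measure Ω) [IsProbabilityMeasure P]
    (T : ℕ) (hT : 0 < T) (γ : ℝ) (hγ : γ ∈ Set.Ioc (0 : ℝ) 1)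
    -- potential outcomes: states and integrable rewards, depending only on past actions
    (S : ℕ → ((s : ℕ) → A s) → Ω → 𝒮) (R : ℕ → ((s : ℕ) → A s) → Ω → ℝ)
    (hSmeas : ∀ t a, Measurable (S t a)) (hRmeas : ∀ t a, Measurable (R t a))
    (hSpre : ∀ t (a a' : (s : ℕ) → A s), (∀ s, s < t → a s = a' s) → S t a = S t a')
    (hRpre : ∀ t (a a' : (s : ℕ) → A s), (∀ s, s ≤ t → a s = a' s) → R t a = R t a')
    (hRint : ∀ t a, Integrable (R t a) P)
    -- observed actions generated by the (unknown) behavior policy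
    (Aobs : (t : ℕ) → Ω → A t) (hAobs : ∀ t, Measurable (Aobs t))
    -- the evaluation policy π̄ and the actions Ā it generates
    (πbar : (t : ℕ) → A t → ((s : ℕ) → A s) → Ω → ℝ)
    (hπbarPre : ∀ t (b : A t) (a a' : (s : ℕ) → A s),
      (∀ s, s < t → a s = a' s) → πbar t b a = πbar t b a')
    (hπbarMeas : ∀ t (b : A t) (a : (s : ℕ) → A s), Measurable[histC S t a] (πbar t b a))
    (hπbarNonneg : ∀ t (b : A t) (a : (s : ℕ) → A s) (ω : Ω), 0 ≤ πbar t b a ω)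
    (hπbarSum : ∀ t (a : (s : ℕ) → A s) (ω : Ω), (∑ b : A t, πbar t b a ω) = 1)
    (Abar : (t : ℕ) → Ω → A t) (hAbar : ∀ t, Measurable (Abar t))
    (hGen : GeneratedBy P S T Abar πbar)
    -- sequential ignorability of the evaluation policy
    (hIgEval : ∀ t < T, SeqIgnorableAt P S R T Abar t)
 :
    ∫ ω, ret R γ T (seqOf Abar ω) ω ∂P
      = ∑ aF : (s : Fin T) → A s.1,
          ∫ ω, ret R γ T (extAct T aF) ω *
              ∏ t ∈ Finset.range T, πbar t (extAct T aF t) (extAct T aF) ω ∂P :=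
  evaluation_policy_value_representation_general (m := m) P T γ S R hSmeas hRmeas hSpre hRpre hRint
    πbar hπbarPre hπbarMeas hπbarNonneg hπbarSum Abar hAbar hGen hIgEval

end OPE
end
end

section
/- Let (Ω,ℱ,P) be a probability space, Γ ≥ 1, and Z a real random variable with E[Z²] < ∞. Define 𝔏 := {L : Ω → [0,∞) measurable : E[L] = 1 and L(ω) ≤ Γ·L(ω') for P⊗P-almost every pair (ω,ω')}. Then inf_{L ∈ 𝔏} E[L·Z] = μ*, where μ* is the unique real number satisfying E[(Z − μ*)_+] = Γ·E[(Z − μ*)_−]; equivalently, inf_{L ∈ 𝔏} E[L·Z] = sup{ μ ∈ ℝ : E[(Z − μ)_+ − Γ(Z − μ)_−] ≥ 0 }. -/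
/-! Write `skew Γ t = t₊ - Γ t₋`. For `Γ ≥ 1` it satisfies `skew Γ s - skew Γ t ≥ s - t` when
`s ≥ t`, so `μ ↦ E[skew Γ (Z - μ)]` decreases with slope at most `-1`: its zero `μ*` is unique
and it is nonnegative exactly on `(-∞, μ*]`.

If `L` is an admissible likelihood ratio, the condition on pairs says `L ≤ Γ c` a.e. for
`c = essinf L`, and pointwise `L (Z - μ*) ≥ c · skew Γ (Z - μ*)`; integrating gives
`E[L Z] - μ* ≥ c · E[skew Γ (Z - μ*)] = 0`. The bound is attained by `L` proportional to `Γ` on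
`{Z < μ*}` and to `1` elsewhere, for which `L (Z - μ*)` is proportional to `skew Γ (Z - μ*)`. -/

open MeasureTheory

namespace ConfoundingDual

def skew (Γ t : ℝ) : ℝ := max t 0 - Γ * max (-t) 0

lemma skew_eq_ite_mul (Γ t : ℝ) : skew Γ t = (if t < 0 then Γ else 1) * t := by
  unfold skew
  split_ifs with ht
  · rw [max_eq_right ht.le, max_eq_left (by linarith)]; ring
  · rw [max_eq_left (not_lt.1 ht), max_eq_right (by linarith)]; ring

lemma mul_skew_le_mul {Γ c ℓ : ℝ} (hc : c ≤ ℓ) (hℓ : ℓ ≤ Γ * c) (t : ℝ) :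
    c * skew Γ t ≤ ℓ * t := by
  rw [skew_eq_ite_mul]
  split_ifs with ht <;> nlinarith

lemma sub_le_skew_sub_skew {Γ s t : ℝ} (hΓ : 1 ≤ Γ) (hts : t ≤ s) :
    s - t ≤ skew Γ s - skew Γ t := by
  rw [skew_eq_ite_mul, skew_eq_ite_mul]
  split_ifs <;> nlinarith

section Skew

variable {Ω : Type*} [MeasurableSpace Ω] {P : Measure Ω} {Z : Ω → ℝ} {Γ : ℝ}

lemma integrable_skew [IsFiniteMeasure P] (hZ : Integrable Z P) (Γ μ : ℝ) :
    Integrable (fun ω => skew Γ (Z ω - μ)) P :=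
  have hZμ : Integrable (fun ω => Z ω - μ) P := hZ.sub (integrable_const μ)
  hZμ.pos_part.sub (hZμ.neg.pos_part.const_mul Γ)

lemma integral_skew [IsFiniteMeasure P] (hZ : Integrable Z P) (Γ μ : ℝ) :
    ∫ ω, skew Γ (Z ω - μ) ∂P =
      ∫ ω, max (Z ω - μ) 0 ∂P - Γ * ∫ ω, max (-(Z ω - μ)) 0 ∂P := by
  have hZμ : Integrable (fun ω => Z ω - μ) P := hZ.sub (integrable_const μ)
  rw [← integral_const_mul]
  exact integral_sub hZμ.pos_part (hZμ.neg.pos_part.const_mul Γ)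

lemma sub_add_integral_skew_le [IsProbabilityMeasure P] (hΓ : 1 ≤ Γ) (hZ : Integrable Z P)
    {μ μ' : ℝ} (h : μ ≤ μ') :
    μ' - μ + ∫ ω, skew Γ (Z ω - μ') ∂P ≤ ∫ ω, skew Γ (Z ω - μ) ∂P := by
  have hmono : ∫ _, μ' - μ ∂P ≤ ∫ ω, (skew Γ (Z ω - μ) - skew Γ (Z ω - μ')) ∂P :=
    integral_mono (integrable_const _) ((integrable_skew hZ Γ μ).sub (integrable_skew hZ Γ μ'))
      fun ω => by
        simpa only [sub_sub_sub_cancel_left] using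
          sub_le_skew_sub_skew hΓ (by linarith : Z ω - μ' ≤ Z ω - μ)
  rw [integral_const, integral_sub (integrable_skew hZ Γ μ) (integrable_skew hZ Γ μ')] at hmono
  simp only [probReal_univ, one_smul] at hmono
  linarith

lemma integral_skew_nonneg_iff [IsProbabilityMeasure P] (hΓ : 1 ≤ Γ) (hZ : Integrable Z P)
    {μ : ℝ} (hμ : ∫ ω, skew Γ (Z ω - μ) ∂P = 0) (ν : ℝ) :
    0 ≤ ∫ ω, skew Γ (Z ω - ν) ∂P ↔ ν ≤ μ := by
  constructor
  · intro hν
    by_contra! hlt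
    have := sub_add_integral_skew_le hΓ hZ hlt.le
    linarith
  · intro hle
    have := sub_add_integral_skew_le hΓ hZ hle
    linarith

end Skew

section LikelihoodRatio

variable {Ω : Type*} [MeasurableSpace Ω] {P : Measure Ω} {Γ : ℝ}

def IsBoundedLikelihoodRatio (P : Measure Ω) (Γ : ℝ) (L : Ω → ℝ) : Prop :=
  Measurable L ∧ (∀ ω, 0 ≤ L ω) ∧ (∫ ω, L ω ∂P) = 1 ∧ ∀ᵐ p ∂(P.prod P), L p.1 ≤ Γ * L p.2

lemma ae_le_mul_essInf [SFinite P] [NeZero P] {L : Ω → ℝ} (hΓ : 0 < Γ)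
    (h : ∀ᵐ p ∂(P.prod P), L p.1 ≤ Γ * L p.2) :
    ∀ᵐ ω ∂P, L ω ≤ Γ * essInf L P := by
  have hswap : ∀ᵐ p ∂(P.prod P), L p.2 ≤ Γ * L p.1 :=
    Measure.measurePreserving_swap.quasiMeasurePreserving.ae h
  obtain ⟨y₀, hy₀⟩ := (Measure.ae_ae_of_ae_prod hswap).exists
  have hcobdd : Filter.IsCoboundedUnder (· ≥ ·) (ae P) L :=
    Filter.isBoundedUnder_of_eventually_le (a := Γ * L y₀) hy₀ |>.isCoboundedUnder_flip
  filter_upwards [Measure.ae_ae_of_ae_prod h] with x hx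
  have : L x / Γ ≤ essInf L P :=
    le_essInf_of_ae_le _ (hx.mono fun y hy => (div_le_iff₀' hΓ).2 hy) hcobdd
  rwa [div_le_iff₀' hΓ] at this

variable [IsProbabilityMeasure P] {Z : Ω → ℝ} {μ : ℝ}

lemma le_integral_mul_of_ae_le {L : Ω → ℝ} {c : ℝ} (hZ : Integrable Z P)
    (hμ : ∫ ω, skew Γ (Z ω - μ) ∂P = 0) (hL : AEStronglyMeasurable L P)
    (hL1 : ∫ ω, L ω ∂P = 1) (hcL : ∀ᵐ ω ∂P, c ≤ L ω) (hLc : ∀ᵐ ω ∂P, L ω ≤ Γ * c) :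
    μ ≤ ∫ ω, L ω * Z ω ∂P := by
  have hLZ : Integrable (fun ω => L ω * Z ω) P :=
    hZ.bdd_mul hL (c := |c| + |Γ * c|) <| by
      filter_upwards [hcL, hLc] with ω h₁ h₂
      rw [Real.norm_eq_abs, abs_le]
      constructor <;>
        linarith [neg_abs_le c, le_abs_self (Γ * c), abs_nonneg c, abs_nonneg (Γ * c)]
  have hLint : Integrable L P := Integrable.of_integral_ne_zero (by rw [hL1]; exact one_ne_zero)
  have key : ∫ ω, c * skew Γ (Z ω - μ) ∂P ≤ ∫ ω, (L ω * Z ω - μ * L ω) ∂P := by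
    refine integral_mono_ae ((integrable_skew hZ Γ μ).const_mul c)
      (hLZ.sub (hLint.const_mul μ)) ?_
    filter_upwards [hcL, hLc] with ω h₁ h₂
    linarith [mul_skew_le_mul h₁ h₂ (Z ω - μ)]
  rw [integral_const_mul, hμ, integral_sub hLZ (hLint.const_mul μ), integral_const_mul, hL1] at key
  linarith

lemma exists_isBoundedLikelihoodRatio_integral_mul_eq (hΓ : 1 ≤ Γ) (hZ : Integrable Z P)
    (hμ : ∫ ω, skew Γ (Z ω - μ) ∂P = 0) :
    ∃ L, IsBoundedLikelihoodRatio P Γ L ∧ ∫ ω, L ω * Z ω ∂P = μ := by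
  obtain ⟨Zm, hZm, hZZm⟩ : ∃ Zm, Measurable Zm ∧ Z =ᵐ[P] Zm :=
    ⟨_, hZ.1.aemeasurable.measurable_mk, hZ.1.aemeasurable.ae_eq_mk⟩
  set w : Ω → ℝ := fun ω => if Zm ω - μ < 0 then Γ else 1
  have hw : Measurable w :=
    Measurable.ite (measurableSet_lt (hZm.sub_const μ) measurable_const) measurable_const
      measurable_const
  have hw1 (ω : Ω) : 1 ≤ w ω := by dsimp only [w]; split_ifs <;> linarith
  have hwΓ (ω : Ω) : w ω ≤ Γ := by dsimp only [w]; split_ifs <;> linarith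
  have hwnorm : ∀ᵐ ω ∂P, ‖w ω‖ ≤ Γ := ae_of_all _ fun ω => by
    rw [Real.norm_of_nonneg (by linarith [hw1 ω])]; exact hwΓ ω
  have hwint : Integrable w P := Integrable.of_bound hw.aestronglyMeasurable Γ hwnorm
  have hwZint : Integrable (fun ω => w ω * (Z ω - μ)) P :=
    (hZ.sub (integrable_const μ)).bdd_mul hw.aestronglyMeasurable hwnorm
  have hwZ : ∫ ω, w ω * (Z ω - μ) ∂P = 0 := by
    rw [← hμ]
    refine integral_congr_ae ?_
    filter_upwards [hZZm] with ω h
    simp only [w, h, skew_eq_ite_mul]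
  set m := ∫ ω, w ω ∂P
  have hm : 1 ≤ m := by simpa using integral_mono (integrable_const 1) hwint hw1
  have hm0 : m ≠ 0 := by positivity
  refine ⟨fun ω => m⁻¹ * w ω, ⟨hw.const_mul _, fun ω => by positivity, ?_, ?_⟩, ?_⟩
  · rw [integral_const_mul, inv_mul_cancel₀ hm0]
  · refine ae_of_all _ fun p => ?_
    calc m⁻¹ * w p.1 ≤ m⁻¹ * Γ := by gcongr; exact hwΓ _
      _ ≤ Γ * (m⁻¹ * w p.2) := by
          rw [mul_left_comm]; gcongr; exact le_mul_of_one_le_right (by positivity) (hw1 _)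
  · calc ∫ ω, m⁻¹ * w ω * Z ω ∂P = m⁻¹ * ∫ ω, (w ω * (Z ω - μ) + μ * w ω) ∂P := by
          rw [← integral_const_mul]; congr 1; ext ω; ring
      _ = μ := by
          rw [integral_add hwZint (hwint.const_mul μ), hwZ, integral_const_mul, zero_add,
            mul_comm μ]
          exact inv_mul_cancel_left₀ hm0 μ

lemma le_integral_mul_of_isBoundedLikelihoodRatio (hΓ : 0 < Γ) (hZ : Integrable Z P)
    (hμ : ∫ ω, skew Γ (Z ω - μ) ∂P = 0) {L : Ω → ℝ} (hL : IsBoundedLikelihoodRatio P Γ L) :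
    μ ≤ ∫ ω, L ω * Z ω ∂P :=
  le_integral_mul_of_ae_le hZ hμ hL.1.aestronglyMeasurable hL.2.2.1
    (ae_essInf_le (Filter.isBoundedUnder_of_eventually_ge (ae_of_all _ hL.2.1)))
    (ae_le_mul_essInf hΓ hL.2.2.2)

lemma isLeast_integral_mul (hΓ : 1 ≤ Γ) (hZ : Integrable Z P)
    (hμ : ∫ ω, skew Γ (Z ω - μ) ∂P = 0) :
    IsLeast (Set.range fun L : {L // IsBoundedLikelihoodRatio P Γ L} => ∫ ω, L.1 ω * Z ω ∂P)
      μ := by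
  obtain ⟨L, hL, hLZ⟩ := exists_isBoundedLikelihoodRatio_integral_mul_eq hΓ hZ hμ
  refine ⟨⟨⟨L, hL⟩, hLZ⟩, ?_⟩
  rintro _ ⟨L, rfl⟩
  exact le_integral_mul_of_isBoundedLikelihoodRatio (by linarith) hZ hμ L.2

end LikelihoodRatio

/-- Duality for the worst case over bounded likelihood ratios: for `Γ ≥ 1` and a
square-integrable `Z`, the infimum of `E[L Z]` over all nonnegative mean-one `L` whose
values vary by at most a factor of `Γ` equals the unique `μ*` with
`E[(Z - μ*)₊] = Γ E[(Z - μ*)₋]`, which is also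
`sup {μ : E[(Z - μ)₊ - Γ (Z - μ)₋] ≥ 0}`. -/
theorem inf_over_bounded_likelihood_ratios
    {Ω : Type*} [MeasurableSpace Ω] (P : Measure Ω) [IsProbabilityMeasure P]
    (Γ : ℝ) (hΓ : 1 ≤ Γ)
    (Z : Ω → ℝ) (hZ : MemLp Z 2 P)
    (μstar : ℝ)
    (hμstar : ∫ ω, max (Z ω - μstar) 0 ∂P = Γ * ∫ ω, max (-(Z ω - μstar)) 0 ∂P) :
    (∃! μ : ℝ, ∫ ω, max (Z ω - μ) 0 ∂P = Γ * ∫ ω, max (-(Z ω - μ)) 0 ∂P) ∧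
    (⨅ L : {L : Ω → ℝ // Measurable L ∧ (∀ ω, 0 ≤ L ω) ∧ (∫ ω, L ω ∂P) = 1 ∧
          ∀ᵐ p ∂(P.prod P), L p.1 ≤ Γ * L p.2},
        ∫ ω, (L : Ω → ℝ) ω * Z ω ∂P) = μstar ∧
    μstar = sSup {μ : ℝ |
        0 ≤ ∫ ω, (max (Z ω - μ) 0 - Γ * max (-(Z ω - μ)) 0) ∂P} := by
  have hZ₁ : Integrable Z P := hZ.integrable one_le_two
  have hroot (μ : ℝ) : ∫ ω, skew Γ (Z ω - μ) ∂P = 0 ↔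
      ∫ ω, max (Z ω - μ) 0 ∂P = Γ * ∫ ω, max (-(Z ω - μ)) 0 ∂P := by
    rw [integral_skew hZ₁, sub_eq_zero]
  have hμstar' := (hroot μstar).2 hμstar
  have hnonneg := integral_skew_nonneg_iff hΓ hZ₁ hμstar'
  refine ⟨⟨μstar, hμstar, fun μ hμ => ?_⟩, (isLeast_integral_mul hΓ hZ₁ hμstar').csInf_eq, ?_⟩
  · have hμ' := (hroot μ).2 hμ
    exact le_antisymm ((hnonneg μ).1 hμ'.ge)
      ((integral_skew_nonneg_iff hΓ hZ₁ hμ' μstar).1 hμstar'.ge)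
  · have hset : {μ : ℝ | 0 ≤ ∫ ω, (max (Z ω - μ) 0 - Γ * max (-(Z ω - μ)) 0) ∂P} =
        Set.Iic μstar := Set.ext hnonneg
    rw [hset, csSup_Iic]

end ConfoundingDual
end
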